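/- Let φ : E → ℝ ∪ {+∞} be proper, convex and lower semicontinuous, and let ν, β, γ > 0. Let ^νφ(x) := inf_{y ∈ E} (φ(y) + (1/(2ν))‖y − x‖²) denote the Moreau envelope of φ with parameter ν, and for λ > 0 let prox_{λφ}(x) denote the unique minimizer over E of y ↦ φ(y) + (1/(2λ))‖y − x‖². Define f := ^νφ + (β/2)‖·‖² and κ := 1/(γβ + 1). Then f is real-valued, and for every x ∈ E the unique minimizer over E of y ↦ f(y) + (1/(2γ))‖y − x‖² equals κ·x + (γκ/(γκ + ν))·(prox_{(γκ + ν)φ}(κx) − κx). -/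

import Mathlib

/-!
Completing the square, `f + ‖· - x‖² / (2γ)` is `^νφ + ‖· - κx‖² / (2λ)` with `λ = γκ`, up to
a constant, so the claim is the formula for the proximal point of a Moreau envelope. The two
quadratic penalties combine as
`‖w - y‖² / (2ν) + ‖y - z‖² / (2λ) = ‖w - z‖² / (2(λ + ν)) + ‖y - (z + λ/(λ+ν) (w - z))‖² / (2λν/(λ+ν))`,
so minimizing `φ(w) + ‖w - y‖² / (2ν) + ‖y - z‖² / (2λ)` jointly over `(y, w)` gives the value
`^(λ+ν)φ(z)`, attained exactly at `w = prox_{(λ+ν)φ}(z)`, `y = z + λ/(λ+ν) (w - z)`.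
-/

noncomputable def moreauEnv {E : Type*} [NormedAddCommGroup E] [InnerProductSpace ℝ E]
    (φ : E → EReal) (ν : ℝ) (x : E) : EReal :=
  ⨅ y : E, φ y + ((1 / (2 * ν) * ‖y - x‖ ^ 2 : ℝ) : EReal)

open Set
open scoped RealInnerProductSpace

theorem isMinOn_add_const_iff {α β : Type*} [AddCommMonoid β] [PartialOrder β]
    [IsOrderedCancelAddMonoid β] {f : α → β} {s : Set α} {a : α} (c : β) :
    IsMinOn (fun y => f y + c) s a ↔ IsMinOn f s a := by
  simp only [isMinOn_iff, add_le_add_iff_right]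

theorem isMinOn_toReal_add_iff {α : Type*} {f : α → EReal} {g : α → ℝ} {s : Set α} {a : α}
    (hf : ∀ y, f y ≠ ⊤ ∧ f y ≠ ⊥) :
    IsMinOn (fun y => (f y).toReal + g y) s a ↔ IsMinOn (fun y => f y + (g y : EReal)) s a := by
  have h : ∀ y, f y + (g y : EReal) = ((f y).toReal + g y : ℝ) := fun y => by
    rw [EReal.coe_add, EReal.coe_toReal (hf y).1 (hf y).2]
  simp only [h, isMinOn_iff, EReal.coe_le_coe_iff]

section QuadraticIdentities

variable {E : Type*} [NormedAddCommGroup E] [InnerProductSpace ℝ E]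

theorem norm_sq_add_norm_sub_sq_eq_norm_sub_smul_sq {β γ : ℝ} (hγ : γ ≠ 0)
    (hγβ : γ * β + 1 ≠ 0) (x y : E) :
    β / 2 * ‖y‖ ^ 2 + 1 / (2 * γ) * ‖y - x‖ ^ 2 =
      1 / (2 * (γ * (1 / (γ * β + 1)))) * ‖y - (1 / (γ * β + 1)) • x‖ ^ 2
        + β / (2 * (γ * β + 1)) * ‖x‖ ^ 2 := by
  rw [norm_sub_sq_real, norm_sub_sq_real, norm_smul, inner_smul_right, Real.norm_eq_abs,
    mul_pow, sq_abs]
  have hβγ : β * γ + 1 ≠ 0 := by rwa [mul_comm]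
  field_simp
  ring

theorem norm_sub_sq_add_norm_sub_sq_eq {ν lam : ℝ} (hν : 0 < ν) (hlam : 0 < lam) (w y z : E) :
    1 / (2 * ν) * ‖w - y‖ ^ 2 + 1 / (2 * lam) * ‖y - z‖ ^ 2 =
      1 / (2 * (lam + ν)) * ‖w - z‖ ^ 2
        + (lam + ν) / (2 * ν * lam) * ‖y - (z + (lam / (lam + ν)) • (w - z))‖ ^ 2 := by
  rw [show w - y = (w - z) - (y - z) by abel,
    show y - (z + (lam / (lam + ν)) • (w - z)) = (y - z) - (lam / (lam + ν)) • (w - z) by abel]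
  generalize w - z = a
  generalize y - z = b
  rw [norm_sub_sq_real, norm_sub_sq_real, norm_smul, inner_smul_right, Real.norm_eq_abs,
    mul_pow, sq_abs, real_inner_comm]
  field_simp
  ring

end QuadraticIdentities

section MoreauEnvelope

variable {E : Type*} [NormedAddCommGroup E] [InnerProductSpace ℝ E]

noncomputable def proxObjective (φ : E → EReal) (lam : ℝ) (x y : E) : EReal :=
  φ y + ((1 / (2 * lam) * ‖y - x‖ ^ 2 : ℝ) : EReal)

variable {φ : E → EReal} {ν lam : ℝ} {x y z w p x₀ : E}

theorem moreauEnv_le_proxObjective (φ : E → EReal) (ν : ℝ) (x w : E) :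
    moreauEnv φ ν x ≤ proxObjective φ ν x w :=
  iInf_le (proxObjective φ ν x) w

theorem IsMinOn.moreauEnv_eq (h : IsMinOn (proxObjective φ ν x) univ p) :
    moreauEnv φ ν x = proxObjective φ ν x p :=
  le_antisymm (moreauEnv_le_proxObjective φ ν x p) (le_iInf (isMinOn_univ_iff.mp h))

theorem moreauEnv_ne_top (h : φ w ≠ ⊤) : moreauEnv φ ν x ≠ ⊤ :=
  ne_top_of_le_ne_top (EReal.add_ne_top h (EReal.coe_ne_top _))
    (moreauEnv_le_proxObjective φ ν x w)

theorem IsMinOn.moreauEnv_ne_bot (h : IsMinOn (proxObjective φ ν x) univ p) (hp : φ p ≠ ⊥) :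
    moreauEnv φ ν x ≠ ⊥ :=
  h.moreauEnv_eq ▸ EReal.add_ne_bot_iff.mpr ⟨hp, EReal.coe_ne_bot _⟩

theorem proxObjective_add_eq (hν : 0 < ν) (hlam : 0 < lam) (φ : E → EReal) (w y z : E) :
    proxObjective φ ν y w + ((1 / (2 * lam) * ‖y - z‖ ^ 2 : ℝ) : EReal) =
      proxObjective φ (lam + ν) z w
        + (((lam + ν) / (2 * ν * lam) * ‖y - (z + (lam / (lam + ν)) • (w - z))‖ ^ 2 : ℝ) :
          EReal) := by
  simp only [proxObjective]
  rw [add_assoc, add_assoc, ← EReal.coe_add, ← EReal.coe_add,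
    norm_sub_sq_add_norm_sub_sq_eq hν hlam]

theorem proxObjective_moreauEnv_le (hν : 0 < ν) (hlam : 0 < lam) (φ : E → EReal) (w y z : E) :
    proxObjective (moreauEnv φ ν) lam z y ≤
      proxObjective φ (lam + ν) z w
        + (((lam + ν) / (2 * ν * lam) * ‖y - (z + (lam / (lam + ν)) • (w - z))‖ ^ 2 : ℝ) :
          EReal) :=
  (add_le_add (moreauEnv_le_proxObjective φ ν y w) le_rfl).trans_eq
    (proxObjective_add_eq hν hlam φ w y z)

theorem IsMinOn.proxObjective_moreauEnv_eq (hν : 0 < ν) (hlam : 0 < lam)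
    (h : IsMinOn (proxObjective φ ν y) univ w) (z : E) :
    proxObjective (moreauEnv φ ν) lam z y =
      proxObjective φ (lam + ν) z w
        + (((lam + ν) / (2 * ν * lam) * ‖y - (z + (lam / (lam + ν)) • (w - z))‖ ^ 2 : ℝ) :
          EReal) := by
  rw [← proxObjective_add_eq hν hlam, ← h.moreauEnv_eq]
  rfl

theorem IsMinOn.proxObjective_le_proxObjective_moreauEnv (hν : 0 < ν) (hlam : 0 < lam)
    (h : IsMinOn (proxObjective φ ν y) univ w) (z : E) :
    proxObjective φ (lam + ν) z w ≤ proxObjective (moreauEnv φ ν) lam z y := by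
  rw [h.proxObjective_moreauEnv_eq hν hlam z]
  exact le_add_of_nonneg_right (EReal.coe_nonneg.mpr (by positivity))

theorem moreauEnv_add_le_proxObjective_moreauEnv (hν : 0 < ν) (hlam : 0 < lam)
    (hprox : ∀ y, ∃ w, IsMinOn (proxObjective φ ν y) univ w) (z y : E) :
    moreauEnv φ (lam + ν) z ≤ proxObjective (moreauEnv φ ν) lam z y :=
  let ⟨w, hw⟩ := hprox y
  (moreauEnv_le_proxObjective φ (lam + ν) z w).trans
    (hw.proxObjective_le_proxObjective_moreauEnv hν hlam z)

theorem IsMinOn.proxObjective_moreauEnv_le_moreauEnv_add (hν : 0 < ν) (hlam : 0 < lam)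
    (hp : IsMinOn (proxObjective φ (lam + ν) z) univ p) :
    proxObjective (moreauEnv φ ν) lam z (z + (lam / (lam + ν)) • (p - z)) ≤
      moreauEnv φ (lam + ν) z := by
  simpa only [sub_self, norm_zero, ne_eq, OfNat.ofNat_ne_zero, not_false_eq_true, zero_pow,
    mul_zero, EReal.coe_zero, add_zero, ← hp.moreauEnv_eq] using
    proxObjective_moreauEnv_le hν hlam φ p (z + (lam / (lam + ν)) • (p - z)) z

theorem isMinOn_proxObjective_moreauEnv_iff (hν : 0 < ν) (hlam : 0 < lam)
    (hprox : ∀ y, ∃ w, IsMinOn (proxObjective φ ν y) univ w)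
    (hp : IsMinOn (proxObjective φ (lam + ν) z) univ p)
    (huniq : ∀ w, IsMinOn (proxObjective φ (lam + ν) z) univ w → w = p)
    (h₀ : φ x₀ ≠ ⊤) (hpφ : φ p ≠ ⊥) :
    IsMinOn (proxObjective (moreauEnv φ ν) lam z) univ y ↔
      y = z + (lam / (lam + ν)) • (p - z) := by
  have hq := hp.proxObjective_moreauEnv_le_moreauEnv_add hν hlam
  refine ⟨fun hy => ?_, fun hy => isMinOn_univ_iff.mpr fun v =>
    hy ▸ hq.trans (moreauEnv_add_le_proxObjective_moreauEnv hν hlam hprox z v)⟩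
  obtain ⟨w, hw⟩ := hprox y
  have hym := (isMinOn_univ_iff.mp hy _).trans hq
  have hwp : w = p := huniq w <| isMinOn_univ_iff.mpr fun v =>
    ((hw.proxObjective_le_proxObjective_moreauEnv hν hlam z).trans hym).trans
      (moreauEnv_le_proxObjective φ _ z v)
  have hm : moreauEnv φ (lam + ν) z ≠ ⊤ ∧ moreauEnv φ (lam + ν) z ≠ ⊥ :=
    ⟨moreauEnv_ne_top h₀, hp.moreauEnv_ne_bot hpφ⟩
  rw [hw.proxObjective_moreauEnv_eq hν hlam, hwp, ← hp.moreauEnv_eq,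
    ← EReal.coe_toReal hm.1 hm.2, ← EReal.coe_add, EReal.coe_le_coe_iff] at hym
  have hsq : ‖y - (z + (lam / (lam + ν)) • (p - z))‖ ^ 2 ≤ 0 :=
    nonpos_of_mul_nonpos_right (a := (lam + ν) / (2 * ν * lam)) (by linarith) (by positivity)
  simpa [sub_eq_zero] using hsq

end MoreauEnvelope

theorem nexos_prox_of_smoothed_nonsmooth_cost_general
    {E : Type*} [NormedAddCommGroup E] [InnerProductSpace ℝ E]
    (φ : E → EReal)
    -- `φ` is proper (never `−∞`, not identically `+∞`)
    (hproper : (∃ x, φ x ≠ ⊤) ∧ ∀ x, φ x ≠ ⊥)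
    (ν β γ : ℝ) (hν : 0 < ν) (hβ : 0 < β) (hγ : 0 < γ)
    -- `prox lam x` is the unique minimizer over `E` of `y ↦ φ(y) + (1/(2 lam))‖y − x‖²`
    (prox : ℝ → E → E)
    (hprox : ∀ lam : ℝ, 0 < lam → ∀ x : E,
      (∀ y : E, φ (prox lam x) + ((1 / (2 * lam) * ‖prox lam x - x‖ ^ 2 : ℝ) : EReal)
        ≤ φ y + ((1 / (2 * lam) * ‖y - x‖ ^ 2 : ℝ) : EReal)) ∧
      (∀ y : E, (∀ w : E, φ y + ((1 / (2 * lam) * ‖y - x‖ ^ 2 : ℝ) : EReal)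
        ≤ φ w + ((1 / (2 * lam) * ‖w - x‖ ^ 2 : ℝ) : EReal)) → y = prox lam x)) :
    -- `f = ^νφ + (β/2)‖·‖²` is real-valued …
    (∀ x : E, moreauEnv φ ν x ≠ ⊤ ∧ moreauEnv φ ν x ≠ ⊥) ∧
    -- … and for every `x`, the unique minimizer of `y ↦ f(y) + (1/(2γ))‖y − x‖²`
    -- equals `κx + (γκ/(γκ+ν))(prox_{(γκ+ν)φ}(κx) − κx)` with `κ = 1/(γβ+1)`
    (∀ x : E,
      IsMinOn
        (fun y => (moreauEnv φ ν y).toReal + β / 2 * ‖y‖ ^ 2 + 1 / (2 * γ) * ‖y - x‖ ^ 2)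
        Set.univ
        ((1 / (γ * β + 1)) • x + (γ * (1 / (γ * β + 1)) / (γ * (1 / (γ * β + 1)) + ν)) •
          (prox (γ * (1 / (γ * β + 1)) + ν) ((1 / (γ * β + 1)) • x)
            - (1 / (γ * β + 1)) • x)) ∧
      (∀ y : E,
        IsMinOn
          (fun y => (moreauEnv φ ν y).toReal + β / 2 * ‖y‖ ^ 2 + 1 / (2 * γ) * ‖y - x‖ ^ 2)
          Set.univ y →
        y = (1 / (γ * β + 1)) • x + (γ * (1 / (γ * β + 1)) / (γ * (1 / (γ * β + 1)) + ν)) •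
          (prox (γ * (1 / (γ * β + 1)) + ν) ((1 / (γ * β + 1)) • x)
            - (1 / (γ * β + 1)) • x))) := by
  obtain ⟨⟨x₀, hx₀⟩, hφ⟩ := hproper
  have hmin : ∀ lam, 0 < lam → ∀ x, IsMinOn (proxObjective φ lam x) univ (prox lam x) :=
    fun lam hlam x => isMinOn_univ_iff.mpr (hprox lam hlam x).1
  have henv : ∀ x, moreauEnv φ ν x ≠ ⊤ ∧ moreauEnv φ ν x ≠ ⊥ :=
    fun x => ⟨moreauEnv_ne_top hx₀, (hmin ν hν x).moreauEnv_ne_bot (hφ _)⟩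
  refine ⟨henv, fun x => ?_⟩
  have hlam : 0 < γ * (1 / (γ * β + 1)) := by positivity
  have hμ : 0 < γ * (1 / (γ * β + 1)) + ν := by positivity
  have key := fun y => isMinOn_proxObjective_moreauEnv_iff (y := y) hν hlam
    (fun y => ⟨_, hmin ν hν y⟩) (hmin _ hμ ((1 / (γ * β + 1)) • x))
    (fun w hw => (hprox _ hμ _).2 w (isMinOn_univ_iff.mp hw)) hx₀ (hφ _)
  have hsplit : ∀ y, (moreauEnv φ ν y).toReal + β / 2 * ‖y‖ ^ 2 + 1 / (2 * γ) * ‖y - x‖ ^ 2 =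
      ((moreauEnv φ ν y).toReal
        + 1 / (2 * (γ * (1 / (γ * β + 1)))) * ‖y - (1 / (γ * β + 1)) • x‖ ^ 2)
        + β / (2 * (γ * β + 1)) * ‖x‖ ^ 2 := fun y => by
    rw [add_assoc, norm_sq_add_norm_sub_sq_eq_norm_sub_smul_sq hγ.ne' (by positivity), add_assoc]
  simp only [hsplit, isMinOn_add_const_iff, isMinOn_toReal_add_iff henv]
  exact ⟨(key _).mpr rfl, fun y => (key y).mp⟩

/-- For a proper, convex, lower semicontinuous
`φ : E → ℝ ∪ {+∞}` and `ν, β, γ > 0`, the function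
`f := ^νφ + (β/2)‖·‖²` is real-valued, and with `κ := 1/(γβ+1)` the proximal
operator of `f` (with parameter `γ`) is given by
`prox_{γf}(x) = κx + (γκ/(γκ+ν))(prox_{(γκ+ν)φ}(κx) − κx)`. -/
theorem nexos_prox_of_smoothed_nonsmooth_cost
    {E : Type*} [NormedAddCommGroup E] [InnerProductSpace ℝ E] [FiniteDimensional ℝ E]
    (φ : E → EReal)
    -- `φ` is proper (never `−∞`, not identically `+∞`)
    (hproper : (∃ x, φ x ≠ ⊤) ∧ ∀ x, φ x ≠ ⊥)
    -- `φ` is convex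
    (hconv : ∀ x y : E, ∀ a b : ℝ, 0 ≤ a → 0 ≤ b → a + b = 1 →
      φ (a • x + b • y) ≤ (a : EReal) * φ x + (b : EReal) * φ y)
    -- `φ` is lower semicontinuous
    (hlsc : LowerSemicontinuous φ)
    (ν β γ : ℝ) (hν : 0 < ν) (hβ : 0 < β) (hγ : 0 < γ)
    -- `prox lam x` is the unique minimizer over `E` of `y ↦ φ(y) + (1/(2 lam))‖y − x‖²`
    (prox : ℝ → E → E)
    (hprox : ∀ lam : ℝ, 0 < lam → ∀ x : E,
      (∀ y : E, φ (prox lam x) + ((1 / (2 * lam) * ‖prox lam x - x‖ ^ 2 : ℝ) : EReal)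
        ≤ φ y + ((1 / (2 * lam) * ‖y - x‖ ^ 2 : ℝ) : EReal)) ∧
      (∀ y : E, (∀ w : E, φ y + ((1 / (2 * lam) * ‖y - x‖ ^ 2 : ℝ) : EReal)
        ≤ φ w + ((1 / (2 * lam) * ‖w - x‖ ^ 2 : ℝ) : EReal)) → y = prox lam x)) :
    -- `f = ^νφ + (β/2)‖·‖²` is real-valued …
    (∀ x : E, moreauEnv φ ν x ≠ ⊤ ∧ moreauEnv φ ν x ≠ ⊥) ∧
    -- … and for every `x`, the unique minimizer of `y ↦ f(y) + (1/(2γ))‖y − x‖²`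
    -- equals `κx + (γκ/(γκ+ν))(prox_{(γκ+ν)φ}(κx) − κx)` with `κ = 1/(γβ+1)`
    (∀ x : E,
      IsMinOn
        (fun y => (moreauEnv φ ν y).toReal + β / 2 * ‖y‖ ^ 2 + 1 / (2 * γ) * ‖y - x‖ ^ 2)
        Set.univ
        ((1 / (γ * β + 1)) • x + (γ * (1 / (γ * β + 1)) / (γ * (1 / (γ * β + 1)) + ν)) •
          (prox (γ * (1 / (γ * β + 1)) + ν) ((1 / (γ * β + 1)) • x)
            - (1 / (γ * β + 1)) • x)) ∧
      (∀ y : E,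
        IsMinOn
          (fun y => (moreauEnv φ ν y).toReal + β / 2 * ‖y‖ ^ 2 + 1 / (2 * γ) * ‖y - x‖ ^ 2)
          Set.univ y →
        y = (1 / (γ * β + 1)) • x + (γ * (1 / (γ * β + 1)) / (γ * (1 / (γ * β + 1)) + ν)) •
          (prox (γ * (1 / (γ * β + 1)) + ν) ((1 / (γ * β + 1)) • x)
            - (1 / (γ * β + 1)) • x))) :=
  nexos_prox_of_smoothed_nonsmooth_cost_general φ hproper ν β γ hν hβ hγ prox hprox
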